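/- Let Γ₁ = {(p∧q)∧t, ~p∨r, ~q∨s, ~p∨~q, t⊃~p}, where p, q, r, s, t are distinct propositional variables. Then there is a finite Δ ⊆ Ω with Δ ∩ U(Γ₁) = ∅ and Γ₁ ⊢_CLuN s ∨ Dab(Δ) (so s is finally ACLuN1-derivable from Γ₁), but there is no finite Δ ⊆ Ω with Δ ∩ U(Γ₁) = ∅ and Γ₁ ⊢_CLuN r ∨ Dab(Δ) (so r is not finally ACLuN1-derivable from Γ₁). -/

import Mathlib

/-- Propositional formulas: variables, ⊥, ⊃, ∧, ∨, ≡, and paraconsistent negation ~. -/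
inductive Formula : Type
  | var : ℕ → Formula
  | bot : Formula
  | imp : Formula → Formula → Formula
  | conj : Formula → Formula → Formula
  | disj : Formula → Formula → Formula
  | equiv : Formula → Formula → Formula
  | pneg : Formula → Formula
  deriving DecidableEq

namespace Formula

/-- Classical negation: ¬A := A ⊃ ⊥. -/
def neg (A : Formula) : Formula := imp A bot

end Formula

/-- Hilbert-style derivability. `cl = false` gives CLuN (full positive classical logic,
including Peirce's law, plus ⊥ ⊃ A and A ∨ ~A, with modus ponens as only rule);
`cl = true` additionally has the axiom schema (A ∧ ~A) ⊃ B, giving CL. -/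
inductive Deriv (cl : Bool) (Γ : Set Formula) : Formula → Prop
  | prem {A : Formula} : A ∈ Γ → Deriv cl Γ A
  | axK (A B : Formula) : Deriv cl Γ (A.imp (B.imp A))
  | axS (A B C : Formula) : Deriv cl Γ ((A.imp (B.imp C)).imp ((A.imp B).imp (A.imp C)))
  | axPeirce (A B : Formula) : Deriv cl Γ (((A.imp B).imp A).imp A)
  | axAndElimL (A B : Formula) : Deriv cl Γ ((A.conj B).imp A)
  | axAndElimR (A B : Formula) : Deriv cl Γ ((A.conj B).imp B)
  | axAndIntro (A B : Formula) : Deriv cl Γ (A.imp (B.imp (A.conj B)))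
  | axOrIntroL (A B : Formula) : Deriv cl Γ (A.imp (A.disj B))
  | axOrIntroR (A B : Formula) : Deriv cl Γ (B.imp (A.disj B))
  | axOrElim (A B C : Formula) : Deriv cl Γ ((A.imp C).imp ((B.imp C).imp ((A.disj B).imp C)))
  | axIffElimL (A B : Formula) : Deriv cl Γ ((A.equiv B).imp (A.imp B))
  | axIffElimR (A B : Formula) : Deriv cl Γ ((A.equiv B).imp (B.imp A))
  | axIffIntro (A B : Formula) : Deriv cl Γ ((A.imp B).imp ((B.imp A).imp (A.equiv B)))
  | axBot (A : Formula) : Deriv cl Γ (Formula.bot.imp A)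
  | axEM (A : Formula) : Deriv cl Γ (A.disj A.pneg)
  | axCL (A B : Formula) : cl = true → Deriv cl Γ ((A.conj A.pneg).imp B)
  | mp {A B : Formula} : Deriv cl Γ (A.imp B) → Deriv cl Γ A → Deriv cl Γ B

/-- Γ ⊢_CLuN A -/
def CLuN (Γ : Set Formula) (A : Formula) : Prop := Deriv false Γ A

/-- Γ ⊢_CL A -/
def CL (Γ : Set Formula) (A : Formula) : Prop := Deriv true Γ A

/-- The set of abnormalities Ω: all formulas of the form A ∧ ~A. -/
def Omega : Set Formula := {F | ∃ A : Formula, F = A.conj A.pneg}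

/-- An arbitrary (noncomputable) linear order on formulas, used only to pick a canonical
ordering of the disjuncts of a Dab-formula. -/
noncomputable instance : LinearOrder Formula :=
  @linearOrderOfSTO Formula WellOrderingRel _ (Classical.decRel _)

/-- Disjunction of a list of formulas; the empty disjunction is ⊥. -/
def listDisj : List Formula → Formula
  | [] => Formula.bot
  | [A] => A
  | A :: B :: rest => A.disj (listDisj (B :: rest))

/-- Dab(Δ): the disjunction of the members of the finite set Δ (by convention Dab(∅) := ⊥). -/
noncomputable def Dab (Δ : Finset Formula) : Formula := listDisj (Δ.sort (· ≤ ·))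

/-- Dab(Δ) is a minimal Dab-consequence of Γ: Δ is finite and nonempty, Δ ⊆ Ω,
Γ ⊢_CLuN Dab(Δ), and no nonempty Δ' ⊊ Δ has Γ ⊢_CLuN Dab(Δ'). -/
def MinDabConsequence (Γ : Set Formula) (Δ : Finset Formula) : Prop :=
  Δ.Nonempty ∧ ↑Δ ⊆ Omega ∧ CLuN Γ (Dab Δ) ∧
    ∀ Δ' : Finset Formula, Δ'.Nonempty → Δ' ⊂ Δ → ¬ CLuN Γ (Dab Δ')

/-- U(Γ): the set of formulas unreliable with respect to Γ. -/
def U (Γ : Set Formula) : Set Formula :=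
  {A | ∃ Δ : Finset Formula, MinDabConsequence Γ Δ ∧ A ∈ Δ}

/-- Γ₁ = {(p∧q)∧t, ~p∨r, ~q∨s, ~p∨~q, t⊃~p}. -/
def Gamma1 (p q r s t : ℕ) : Set Formula :=
  {((Formula.var p).conj (Formula.var q)).conj (Formula.var t),
   (Formula.var p).pneg.disj (Formula.var r),
   (Formula.var q).pneg.disj (Formula.var s),
   (Formula.var p).pneg.disj (Formula.var q).pneg,
   (Formula.var t).imp (Formula.var p).pneg}


/-!
Γ₁ derives p, q, t and, through t ⊃ ~p, also ~p; hence p ∧ ~p is a Dab-consequence by itself.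
Conversely, CLuN is sound for valuations in which ~A is true when A is false and may in
addition be true when A is "glutted". Glutting only p and making every variable true satisfies
Γ₁ and falsifies every abnormality other than p ∧ ~p, so every Dab-consequence contains
p ∧ ~p and U(Γ₁) = {p ∧ ~p}. Then s ∨ (q ∧ ~q) follows from ~q ∨ s and q, whereas making only
r false gives a model of Γ₁ refuting r ∨ Dab(Δ) whenever p ∧ ~p ∉ Δ.
-/

open Formula

namespace Deriv

variable {cl : Bool} {Γ : Set Formula}

theorem imp_trans {A B C : Formula} (hAB : Deriv cl Γ (A.imp B)) (hBC : Deriv cl Γ (B.imp C)) :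
    Deriv cl Γ (A.imp C) :=
  mp (mp (axS A B C) (mp (axK (B.imp C) A) hBC)) hAB

theorem and_intro {A B : Formula} (hA : Deriv cl Γ A) (hB : Deriv cl Γ B) :
    Deriv cl Γ (A.conj B) :=
  mp (mp (axAndIntro A B) hA) hB

theorem or_elim {A B C : Formula} (hAB : Deriv cl Γ (A.disj B)) (hAC : Deriv cl Γ (A.imp C))
    (hBC : Deriv cl Γ (B.imp C)) : Deriv cl Γ C :=
  mp (mp (mp (axOrElim A B C) hAC) hBC) hAB

end Deriv

namespace Formula

def eval (atom : ℕ → Bool) (glut : Formula → Bool) : Formula → Bool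
  | var n => atom n
  | bot => false
  | imp A B => !A.eval atom glut || B.eval atom glut
  | conj A B => A.eval atom glut && B.eval atom glut
  | disj A B => A.eval atom glut || B.eval atom glut
  | equiv A B => A.eval atom glut == B.eval atom glut
  | pneg A => glut A || !A.eval atom glut

variable (atom : ℕ → Bool) (glut : Formula → Bool)

theorem eval_abnormality (A : Formula) :
    (A.conj A.pneg).eval atom glut = (A.eval atom glut && glut A) := by
  cases hA : A.eval atom glut <;> simp [eval, hA]

theorem eval_listDisj :
    ∀ L : List Formula, (listDisj L).eval atom glut = L.any (eval atom glut)
  | [] => rfl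
  | [A] => by simp [listDisj]
  | A :: B :: L => by simp [listDisj, eval, eval_listDisj (B :: L)]

theorem eval_Dab (Δ : Finset Formula) :
    (Dab Δ).eval atom glut = true ↔ ∃ A ∈ Δ, A.eval atom glut = true := by
  simp [Dab, eval_listDisj]

theorem abnormality_mem_of_eval_Dab {B : Formula} {Δ : Finset Formula} (hΩ : ↑Δ ⊆ Omega)
    (h : (Dab Δ).eval atom (· = B) = true) : B.conj B.pneg ∈ Δ := by
  obtain ⟨F, hF, hFtrue⟩ := (eval_Dab atom _ Δ).1 h
  obtain ⟨A, rfl⟩ := hΩ hF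
  rw [eval_abnormality, Bool.and_eq_true, decide_eq_true_iff] at hFtrue
  rwa [← hFtrue.2]

end Formula

theorem Deriv.sound {atom : ℕ → Bool} {glut : Formula → Bool} {Γ : Set Formula} {A : Formula}
    (h : Deriv false Γ A) (hΓ : ∀ B ∈ Γ, B.eval atom glut = true) :
    A.eval atom glut = true := by
  induction h with
  | prem hA => exact hΓ _ hA
  | axCL _ _ h => exact absurd h Bool.false_ne_true
  | mp _ _ ihAB ihA => simpa [eval, ihA] using ihAB
  | axEM A => cases hA : A.eval atom glut <;> simp [eval, hA]
  | axBot => rfl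
  | _ =>
    rename_i A B
    cases hA : A.eval atom glut <;> cases hB : B.eval atom glut <;> simp [eval, *]

theorem Dab_singleton (A : Formula) : Dab {A} = A := by
  rw [Dab, Finset.sort_singleton]
  rfl

theorem U_eq_singleton_of_forall_mem {Γ : Set Formula} {A : Formula} (hA : A ∈ Omega)
    (hΓA : CLuN Γ A) (hmem : ∀ Δ : Finset Formula, ↑Δ ⊆ Omega → CLuN Γ (Dab Δ) → A ∈ Δ) :
    U Γ = {A} := by
  have hmin : MinDabConsequence Γ {A} :=
    ⟨Finset.singleton_nonempty A, by simpa using hA, by rwa [Dab_singleton],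
      fun Δ' hne hss => absurd (Finset.eq_empty_of_ssubset_singleton hss) hne.ne_empty⟩
  ext F
  refine ⟨?_, fun hF => ⟨{A}, hmin, by simpa using hF⟩⟩
  rintro ⟨Δ, ⟨-, hΩ, hΓΔ, hminΔ⟩, hF⟩
  have hAΔ : {A} ⊆ Δ := Finset.singleton_subset_iff.2 (hmem Δ hΩ hΓΔ)
  have hΔ : Δ = {A} := by
    by_contra hne
    exact hminΔ {A} (Finset.singleton_nonempty A) (hAΔ.ssubset_of_ne (Ne.symm hne))
      (by rwa [Dab_singleton])
  simpa [hΔ] using hF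

section Gamma1

variable (p q r s t : ℕ)

theorem Gamma1_derives_p_q_t :
    CLuN (Gamma1 p q r s t) (var p) ∧ CLuN (Gamma1 p q r s t) (var q) ∧
      CLuN (Gamma1 p q r s t) (var t) := by
  have hpqt : Deriv false (Gamma1 p q r s t) (((var p).conj (var q)).conj (var t)) :=
    .prem (by simp [Gamma1])
  have hpq := Deriv.mp (.axAndElimL _ _) hpqt
  exact ⟨.mp (.axAndElimL _ _) hpq, .mp (.axAndElimR _ _) hpq, .mp (.axAndElimR _ _) hpqt⟩

theorem Gamma1_derives_abnormality_p : CLuN (Gamma1 p q r s t) ((var p).conj (var p).pneg) := by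
  obtain ⟨hp, -, ht⟩ := Gamma1_derives_p_q_t p q r s t
  exact hp.and_intro (.mp (.prem (by simp [Gamma1])) ht)

theorem Gamma1_derives_s_or_abnormality_q :
    CLuN (Gamma1 p q r s t) ((var s).disj ((var q).conj (var q).pneg)) := by
  obtain ⟨-, hq, -⟩ := Gamma1_derives_p_q_t p q r s t
  exact Deriv.or_elim (.prem (by simp [Gamma1]))
    (Deriv.imp_trans (.mp (.axAndIntro _ _) hq) (.axOrIntroR _ _)) (.axOrIntroL _ _)

theorem U_Gamma1 : U (Gamma1 p q r s t) = {(var p).conj (var p).pneg} := by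
  have hmodel : ∀ B ∈ Gamma1 p q r s t, B.eval (fun _ => true) (· = var p) = true := by
    simp [Gamma1, eval]
  refine U_eq_singleton_of_forall_mem ⟨var p, rfl⟩ (Gamma1_derives_abnormality_p p q r s t)
    fun Δ hΩ hΓΔ => abnormality_mem_of_eval_Dab _ hΩ (hΓΔ.sound hmodel)

end Gamma1

theorem Gamma1_s_in_r_out_general (p q r s t : ℕ)
    (hpq : p ≠ q) (hpr : p ≠ r) (hqr : q ≠ r)
    (hrs : r ≠ s) (hrt : r ≠ t) :
    (∃ Δ : Finset Formula, ↑Δ ⊆ Omega ∧ (↑Δ ∩ U (Gamma1 p q r s t) : Set Formula) = ∅ ∧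
      CLuN (Gamma1 p q r s t) ((Formula.var s).disj (Dab Δ))) ∧
    ¬ (∃ Δ : Finset Formula, ↑Δ ⊆ Omega ∧ (↑Δ ∩ U (Gamma1 p q r s t) : Set Formula) = ∅ ∧
      CLuN (Gamma1 p q r s t) ((Formula.var r).disj (Dab Δ))) := by
  simp only [U_Gamma1, Set.inter_singleton_eq_empty, Finset.mem_coe]
  constructor
  · refine ⟨{(var q).conj (var q).pneg}, by simpa using ⟨var q, rfl⟩, by simp [hpq], ?_⟩
    simpa [Dab_singleton] using Gamma1_derives_s_or_abnormality_q p q r s t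
  · rintro ⟨Δ, hΩ, hpΔ, hΓΔ⟩
    have hmodel : ∀ B ∈ Gamma1 p q r s t, B.eval (· ≠ r) (· = var p) = true := by
      simp [Gamma1, eval, hpr, hqr, hrs.symm, hrt.symm]
    have hrΔ := hΓΔ.sound hmodel
    simp only [eval, ne_eq, not_true_eq_false, decide_false, Bool.false_or] at hrΔ
    exact hpΔ (abnormality_mem_of_eval_Dab _ hΩ hrΔ)

/-- s is finally ACLuN1-derivable from Γ₁ but r is not, for pairwise distinct variables
p, q, r, s, t: there is a finite Δ ⊆ Ω with Δ ∩ U(Γ₁) = ∅ and Γ₁ ⊢_CLuN s ∨ Dab(Δ),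
but no finite Δ ⊆ Ω with Δ ∩ U(Γ₁) = ∅ and Γ₁ ⊢_CLuN r ∨ Dab(Δ). -/
theorem Gamma1_s_in_r_out (p q r s t : ℕ)
    (hpq : p ≠ q) (hpr : p ≠ r) (hps : p ≠ s) (hpt : p ≠ t) (hqr : q ≠ r)
    (hqs : q ≠ s) (hqt : q ≠ t) (hrs : r ≠ s) (hrt : r ≠ t) (hst : s ≠ t) :
    (∃ Δ : Finset Formula, ↑Δ ⊆ Omega ∧ (↑Δ ∩ U (Gamma1 p q r s t) : Set Formula) = ∅ ∧
      CLuN (Gamma1 p q r s t) ((Formula.var s).disj (Dab Δ))) ∧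
    ¬ (∃ Δ : Finset Formula, ↑Δ ⊆ Omega ∧ (↑Δ ∩ U (Gamma1 p q r s t) : Set Formula) = ∅ ∧
      CLuN (Gamma1 p q r s t) ((Formula.var r).disj (Dab Δ))) :=
  Gamma1_s_in_r_out_general p q r s t hpq hpr hqr hrs hrt
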